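/- arXiv:1007.1733 — 6 statements merged into one kernel-verified Lean document; each statement's English description precedes it below -/
import Mathlib

section
/- If k, ℓ ∈ {1,…,n} are such that x_k + y_ℓ = z_n, then k = n and ℓ = n. Moreover x_n + y_n = z_n. -/
lemma mono_le_of_strict (m : ℕ) (a : ℕ → ℕ)
    (hmono : ∀ i, 1 ≤ i → i < m → a i < a (i + 1)) :
    ∀ i, 1 ≤ i → i ≤ m → a i ≤ a m := by
  intro i h1 h2
  have key : ∀ j, i ≤ j → j ≤ m → a i ≤ a j := by
    intro j
    induction j with
    | zero => intro h _; omega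
    | succ j ih =>
      intro hij hjm
      rcases Nat.lt_or_ge i (j + 1) with h | h
      · have hij' : i ≤ j := by omega
        have := hmono j (by omega) (by omega)
        have := ih hij' (by omega)
        omega
      · have : i = j + 1 := by omega
        rw [this]
  exact key m h2 le_rfl

/-- If `k, ℓ ∈ {1,…,n}` are such that `x k + y ℓ = z n`, then
`k = n` and `ℓ = n` (with `n = m+1`). Moreover `x n + y n = z n`. -/
theorem stmt_4 (m : ℕ) (hm : 1 ≤ m) (a b s x y z : ℕ → ℕ)
    (hapos : ∀ i, 1 ≤ i → i ≤ m → 0 < a i)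
    (hbpos : ∀ i, 1 ≤ i → i ≤ m → 0 < b i)
    (hspos : ∀ i, 1 ≤ i → i ≤ m → 0 < s i)
    (hamono : ∀ i, 1 ≤ i → i < m → a i < a (i + 1))
    (hbmono : ∀ i, 1 ≤ i → i < m → b i < b (i + 1))
    (hsmono : ∀ i, 1 ≤ i → i < m → s i < s (i + 1))
    (hab : a m < b m)
    (hsab : s m ≤ a m + b m)
    (hx : ∀ i, 1 ≤ i → i ≤ m → x i = 2 * (a i + (b m + 2)))
    (hxn : x (m + 1) = 2 * (a m + 1 + (b m + 2)))
    (hy : ∀ i, 1 ≤ i → i ≤ m → y i = 2 * (b i + 3 * (b m + 2)))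
    (hyn : y (m + 1) = 2 * (b m + 1 + 3 * (b m + 2)))
    (hz : ∀ i, 1 ≤ i → i ≤ m → z i = 2 * (s i + 4 * (b m + 2)))
    (hzn : z (m + 1) = 2 * (a m + b m + 2 + 4 * (b m + 2))) :
    (∀ k l, 1 ≤ k → k ≤ m + 1 → 1 ≤ l → l ≤ m + 1 →
      x k + y l = z (m + 1) → k = m + 1 ∧ l = m + 1) ∧
    x (m + 1) + y (m + 1) = z (m + 1) := by
  have haM := mono_le_of_strict m a hamono
  have hbM := mono_le_of_strict m b hbmono
  constructor
  · intro k l hk1 hk2 hl1 hl2 heq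
    rcases Nat.lt_or_ge k (m + 1) with hk | hk
    · have hkm : k ≤ m := by omega
      have hak := haM k hk1 hkm
      rcases Nat.lt_or_ge l (m + 1) with hl | hl
      · have hlm : l ≤ m := by omega
        have hbl := hbM l hl1 hlm
        rw [hx k hk1 hkm, hy l hl1 hlm, hzn] at heq
        omega
      · have hl' : l = m + 1 := by omega
        rw [hx k hk1 hkm, hl', hyn, hzn] at heq
        omega
    · have hk' : k = m + 1 := by omega
      rcases Nat.lt_or_ge l (m + 1) with hl | hl
      · have hlm : l ≤ m := by omega
        have hbl := hbM l hl1 hlm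
        rw [hk', hxn, hy l hl1 hlm, hzn] at heq
        omega
      · exact ⟨hk', by omega⟩
  · rw [hxn, hyn, hzn]; ring
end

section
/- There exist permutations σ, τ of {1,…,m} such that a_{σ(i)} + b_{τ(i)} = s_i for all i ∈ {1,…,m} if and only if there exist permutations σ', τ' of {1,…,n} such that x_{σ'(i)} + y_{τ'(i)} = z_i for all i ∈ {1,…,n}. (That is, the NMTS instances (A,B,S) and (X,Y,Z) are equivalent.) -/
/-!
The appended elements `a_m + 1`, `b_m + 1` exceed all the others, and their sum is the appended
target, so in any solution of the padded instance that target is hit by the appended pair alone;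
deleting this pair is therefore a bijection between solutions of the padded instance and of the
original one. The map `a ↦ 2(a + c)`, `b ↦ 2(b + 3c)`, `s ↦ 2(s + 4c)` with `c = b_m + 2` preserves
and reflects every equation `a + b = s`, and turns the padded instance into `(x, y, z)`.
-/

theorem strictMonoOn_Icc_of_lt_add_one {α : Type*} [Preorder α] {f : ℕ → α} {a b : ℕ}
    (h : ∀ i, a ≤ i → i < b → f i < f (i + 1)) : StrictMonoOn f (Set.Icc a b) :=
  strictMonoOn_of_lt_succ Set.ordConnected_Icc fun i _ hi hi' => by
    rw [Order.succ_eq_add_one] at hi' ⊢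
    exact h i hi.1 (Nat.lt_of_succ_le hi'.2)

theorem Equiv.optionCongr_removeNone_of_apply_none {ι : Type*} {σ : Equiv.Perm (Option ι)}
    (h : σ none = none) : (Equiv.removeNone σ).optionCongr = σ := by
  classical
  rw [map_equiv_removeNone, h, Equiv.swap_self]
  rfl

namespace NMTS

variable {ι κ α β : Type*}

def Solvable [Add α] (u v t : ι → α) : Prop :=
  ∃ σ τ : Equiv.Perm ι, ∀ i, u (σ i) + v (τ i) = t i

section Add

variable [Add α]

theorem solvable_congr [Add β] {u v t : ι → α} {u' v' t' : ι → β}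
    (h : ∀ i j k, u' i + v' j = t' k ↔ u i + v j = t k) :
    Solvable u' v' t' ↔ Solvable u v t :=
  exists₂_congr fun _ _ => forall_congr' fun _ => h _ _ _

theorem solvable_comp_equiv (e : κ ≃ ι) (u v t : ι → α) :
    Solvable (u ∘ e) (v ∘ e) (t ∘ e) ↔ Solvable u v t := by
  constructor
  · rintro ⟨σ, τ, h⟩
    exact ⟨e.permCongr σ, e.permCongr τ, fun i => by simpa using h (e.symm i)⟩
  · rintro ⟨σ, τ, h⟩
    exact ⟨e.symm.permCongr σ, e.symm.permCongr τ, fun i => by simpa using h (e i)⟩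

theorem solvable_option_iff {u v t : Option ι → α} (hnone : u none + v none = t none)
    (huniq : ∀ i j, u i + v j = t none → i = none ∧ j = none) :
    Solvable u v t ↔ Solvable (u ∘ some) (v ∘ some) (t ∘ some) := by
  constructor
  · rintro ⟨σ, τ, h⟩
    obtain ⟨hσ, hτ⟩ := huniq _ _ (h none)
    refine ⟨Equiv.removeNone σ, Equiv.removeNone τ, fun i => ?_⟩
    rw [← Equiv.optionCongr_removeNone_of_apply_none hσ,
      ← Equiv.optionCongr_removeNone_of_apply_none hτ] at h
    simpa using h (some i)
  · rintro ⟨σ, τ, h⟩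
    refine ⟨σ.optionCongr, τ.optionCongr, ?_⟩
    rintro (_ | i)
    · simpa using hnone
    · simpa using h i

end Add

theorem solvable_option_iff_of_lt [Add α] [Preorder α] [AddLeftStrictMono α]
    [AddRightStrictMono α] {u v t : Option ι → α} (hu : ∀ i, u (some i) < u none)
    (hv : ∀ j, v (some j) < v none) (hnone : u none + v none = t none) :
    Solvable u v t ↔ Solvable (u ∘ some) (v ∘ some) (t ∘ some) := by
  refine solvable_option_iff hnone fun i j h => ?_
  rw [← hnone] at h
  rcases i with _ | i <;> rcases j with _ | j
  · exact ⟨rfl, rfl⟩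
  · exact absurd h (add_lt_add_right (hv j) _).ne
  · exact absurd h (add_lt_add_left (hu i) _).ne
  · exact absurd h (add_lt_add (hu i) (hv j)).ne

end NMTS

open NMTS in
theorem stmt_7_general (m : ℕ) (a b s x y z : ℕ → ℕ)
    (hamono : ∀ i, 1 ≤ i → i < m → a i < a (i + 1))
    (hbmono : ∀ i, 1 ≤ i → i < m → b i < b (i + 1))
    (hx : ∀ i, 1 ≤ i → i ≤ m → x i = 2 * (a i + (b m + 2)))
    (hxn : x (m + 1) = 2 * (a m + 1 + (b m + 2)))
    (hy : ∀ i, 1 ≤ i → i ≤ m → y i = 2 * (b i + 3 * (b m + 2)))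
    (hyn : y (m + 1) = 2 * (b m + 1 + 3 * (b m + 2)))
    (hz : ∀ i, 1 ≤ i → i ≤ m → z i = 2 * (s i + 4 * (b m + 2)))
    (hzn : z (m + 1) = 2 * (a m + b m + 2 + 4 * (b m + 2))) :
    (∃ σ τ : Equiv.Perm (Fin m), ∀ i : Fin m,
        a ((σ i : ℕ) + 1) + b ((τ i : ℕ) + 1) = s ((i : ℕ) + 1)) ↔
    (∃ σ' τ' : Equiv.Perm (Fin (m + 1)), ∀ i : Fin (m + 1),
        x ((σ' i : ℕ) + 1) + y ((τ' i : ℕ) + 1) = z ((i : ℕ) + 1)) := by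
  have ha_le (i : Fin m) : a (i + 1) ≤ a m :=
    (strictMonoOn_Icc_of_lt_add_one hamono).monotoneOn ⟨by omega, i.isLt⟩ ⟨i.pos, le_rfl⟩ i.isLt
  have hb_le (i : Fin m) : b (i + 1) ≤ b m :=
    (strictMonoOn_Icc_of_lt_add_one hbmono).monotoneOn ⟨by omega, i.isLt⟩ ⟨i.pos, le_rfl⟩ i.isLt
  let e := (finSuccEquivLast (n := m)).symm
  let X : Fin (m + 1) → ℕ := fun i => x (i + 1)
  let Y : Fin (m + 1) → ℕ := fun i => y (i + 1)
  let Z : Fin (m + 1) → ℕ := fun i => z (i + 1)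
  have hXe (i : Fin m) : X (e i) = 2 * (a (i + 1) + (b m + 2)) := by simp [X, e, hx _ _ i.isLt]
  have hYe (i : Fin m) : Y (e i) = 2 * (b (i + 1) + 3 * (b m + 2)) := by simp [Y, e, hy _ _ i.isLt]
  have hZe (i : Fin m) : Z (e i) = 2 * (s (i + 1) + 4 * (b m + 2)) := by simp [Z, e, hz _ _ i.isLt]
  have hXn : X (e none) = x (m + 1) := by simp [X, e]
  have hYn : Y (e none) = y (m + 1) := by simp [Y, e]
  have hZn : Z (e none) = z (m + 1) := by simp [Z, e]
  calc _ ↔ Solvable (fun i : Fin m => a (i + 1)) (fun i => b (i + 1)) (fun i => s (i + 1)) :=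
        Iff.rfl
    _ ↔ Solvable ((X ∘ e) ∘ some) ((Y ∘ e) ∘ some) ((Z ∘ e) ∘ some) := by
        refine (solvable_congr fun i j k => ?_).symm
        simp only [Function.comp_apply, hXe, hYe, hZe]
        omega
    _ ↔ Solvable (X ∘ e) (Y ∘ e) (Z ∘ e) := by
        refine (solvable_option_iff_of_lt (fun i => ?_) (fun j => ?_) ?_).symm <;>
          simp only [Function.comp_apply, hXe, hYe, hXn, hYn, hZn, hxn, hyn, hzn]
        · linarith [ha_le i]
        · linarith [hb_le j]
        · ring
    _ ↔ _ := solvable_comp_equiv e X Y Z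

/-- The NMTS instance `(A, B, S)` has a solution iff the NMTS
instance `(X, Y, Z)` has a solution: there exist permutations `σ, τ` of
`{1,…,m}` with `a (σ i) + b (τ i) = s i` for all `i` iff there exist
permutations `σ', τ'` of `{1,…,n}` (with `n = m+1`) with
`x (σ' i) + y (τ' i) = z i` for all `i`. -/
theorem stmt_7 (m : ℕ) (hm : 1 ≤ m) (a b s x y z : ℕ → ℕ)
    (hapos : ∀ i, 1 ≤ i → i ≤ m → 0 < a i)
    (hbpos : ∀ i, 1 ≤ i → i ≤ m → 0 < b i)
    (hspos : ∀ i, 1 ≤ i → i ≤ m → 0 < s i)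
    (hamono : ∀ i, 1 ≤ i → i < m → a i < a (i + 1))
    (hbmono : ∀ i, 1 ≤ i → i < m → b i < b (i + 1))
    (hsmono : ∀ i, 1 ≤ i → i < m → s i < s (i + 1))
    (hab : a m < b m)
    (hsab : s m ≤ a m + b m)
    (hx : ∀ i, 1 ≤ i → i ≤ m → x i = 2 * (a i + (b m + 2)))
    (hxn : x (m + 1) = 2 * (a m + 1 + (b m + 2)))
    (hy : ∀ i, 1 ≤ i → i ≤ m → y i = 2 * (b i + 3 * (b m + 2)))
    (hyn : y (m + 1) = 2 * (b m + 1 + 3 * (b m + 2)))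
    (hz : ∀ i, 1 ≤ i → i ≤ m → z i = 2 * (s i + 4 * (b m + 2)))
    (hzn : z (m + 1) = 2 * (a m + b m + 2 + 4 * (b m + 2))) :
    (∃ σ τ : Equiv.Perm (Fin m), ∀ i : Fin m,
        a ((σ i : ℕ) + 1) + b ((τ i : ℕ) + 1) = s ((i : ℕ) + 1)) ↔
    (∃ σ' τ' : Equiv.Perm (Fin (m + 1)), ∀ i : Fin (m + 1),
        x ((σ' i : ℕ) + 1) + y ((τ' i : ℕ) + 1) = z ((i : ℕ) + 1)) :=
  stmt_7_general m a b s x y z hamono hbmono hx hxn hy hyn hz hzn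
end

section
/- Let j_1,…,j_n be positive integers and let d_1 ≤ d_2 ≤ … ≤ d_n be positive integers with ∑_{i=1}^n j_i = d_{n−1} + d_n, where n ≥ 2. Then there is a valid two-processor schedule of the jobs j_1,…,j_n for the deadlines d_1,…,d_n if and only if there exists a permutation π of {1,…,n} such that the split multiset of the path with weights j_{π(1)},…,j_{π(n)} equals the multiset {d_1,…,d_{n−1}}. (This is the reduction SCD ≤p WSR₂.) -/
/-- The multiset of completion times (nonempty prefix sums) of a list of job lengths
executed consecutively on one processor, starting at time 0. -/
def prefixSums (L : List ℕ) : Multiset ℕ :=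
  ((List.range L.length).map (fun k => (L.take (k + 1)).sum) : List ℕ)

/-- A valid two-processor schedule of the multiset of jobs `J` for the multiset of
deadlines `D`: a partition of the jobs into two ordered sequences (one per processor,
executed without idle time starting at time 0) such that the multiset of all
completion times equals `D`. -/
def ValidSchedule (J D : Multiset ℕ) : Prop :=
  ∃ L1 L2 : List ℕ, ((L1 : Multiset ℕ) + (L2 : Multiset ℕ) = J) ∧
    prefixSums L1 + prefixSums L2 = D

/-- The split multiset of the path whose vertices carry the weights listed in `w`:
the multiset of `min (Pℓ, W − Pℓ)` over all proper nonempty prefixes, where `Pℓ` is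
the `ℓ`-th prefix sum and `W` the total weight. -/
def pathSplits (w : List ℕ) : Multiset ℕ :=
  ((List.range (w.length - 1)).map
    (fun k => min ((w.take (k + 1)).sum) (w.sum - (w.take (k + 1)).sum)) : List ℕ)

/-!
Write `P ℓ` for the prefix sums of a path of total weight `W` and cut it after vertex `c`, where
`2 P (c-1) ≤ W ≤ 2 P (c+1)`. Left of the cut every split is `P ℓ`, right of it every split is
`W - P ℓ`, so the prefix sums of the left part and those of the reversed right part together form
the split multiset plus the single value `max (P c) (W - P c)`.

In a schedule the processors finish at `d (n-1)` and `d n`, since `d n` is the largest deadline and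
the loads add up to `d (n-1) + d n`. Running the first processor's jobs in order and then the
second's backwards gives a path balanced at the junction, with extra value `d n`. Conversely, as
jobs are positive, a path is balanced at any cut realising its largest split `d (n-1)`, and the
extra value is `W - d (n-1) = d n`.
-/

open Multiset

theorem List.sum_take_lt_sum_take {L : List ℕ} (hL : ∀ x ∈ L, 0 < x) {i k : ℕ} (hik : i < k)
    (hk : k ≤ L.length) : (L.take i).sum < (L.take k).sum :=
  calc (L.take i).sum < (L.take (i + 1)).sum := by
        rw [sum_take_succ L i (by omega)]
        exact Nat.lt_add_of_pos_right (hL _ (getElem_mem _))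
    _ ≤ (L.take k).sum := monotone_sum_take L hik

theorem List.sum_take_le_sum (L : List ℕ) (i : ℕ) : (L.take i).sum ≤ L.sum :=
  Nat.le.intro (sum_take_add_sum_drop L i)

theorem List.sum_take_reverse (L : List ℕ) (k : ℕ) :
    (L.reverse.take k).sum = L.sum - (L.take (L.length - k)).sum := by
  rw [take_reverse, sum_reverse, ← sum_take_add_sum_drop L (L.length - k)]
  omega

theorem List.exists_perm_ofFn_comp_eq {α : Type*} [LinearOrder α] {n : ℕ} {f : Fin n → α}
    {l : List α} (h : l.Perm (List.ofFn f)) : ∃ σ : Equiv.Perm (Fin n), List.ofFn (f ∘ σ) = l := by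
  obtain ⟨g, rfl⟩ : ∃ g : Fin n → α, List.ofFn g = l := by
    obtain rfl : l.length = n := by simpa using h.length_eq
    exact ⟨l.get, List.ofFn_get l⟩
  have hsort : f ∘ Tuple.sort f = g ∘ Tuple.sort g := List.ofFn_inj.1 <|
    List.Perm.eq_of_sortedLE (Tuple.monotone_sort f).sortedLE_ofFn
      (Tuple.monotone_sort g).sortedLE_ofFn
      (((Tuple.sort f).ofFn_comp_perm f).trans
        (h.symm.trans ((Tuple.sort g).ofFn_comp_perm g).symm))
  refine ⟨(Tuple.sort g).symm.trans (Tuple.sort f), congrArg List.ofFn (funext fun i => ?_)⟩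
  simpa using congrFun hsort ((Tuple.sort g).symm i)

theorem Multiset.Ico_zero_eq_range (n : ℕ) : Ico 0 n = range n :=
  congrArg Finset.val (Nat.Ico_zero_eq_range n)

theorem Multiset.Ico_succ_singleton (a : ℕ) : Ico a (a + 1) = {a} :=
  congrArg Finset.val (Nat.Ico_succ_singleton a)

theorem Multiset.map_range_reflect (n : ℕ) : (range n).map (fun k => n - 1 - k) = range n := by
  conv_rhs => rw [← coe_range, ← coe_reverse, List.range_eq_range', List.reverse_range']
  rw [← map_coe, coe_range, zero_add]

theorem Multiset.map_range_eq_ofFn {α : Type*} (f : ℕ → α) (n : ℕ) :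
    (range n).map f = ↑(List.ofFn fun i : Fin n => f i) := by
  rw [List.ofFn_eq_map, ← coe_range, ← List.map_coe_finRange_eq_range, map_coe, List.map_map]
  rfl

theorem Finset.map_Icc_one_val_eq_ofFn {α : Type*} (f : ℕ → α) (n : ℕ) :
    (Icc 1 n).val.map f = ↑(List.ofFn fun i : Fin n => f (i + 1)) := by
  rw [← Ico_add_one_right_eq_Icc, ← map_range_eq_ofFn (fun i => f (i + 1)),
    ← Multiset.Ico_zero_eq_range]
  change (Multiset.Ico 1 (n + 1)).map f = _
  rw [← Multiset.map_add_right_Ico 0 n 1, Multiset.map_map]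
  rfl

theorem Finset.map_Icc_one_val_eq_add_singleton {α : Type*} (f : ℕ → α) {n : ℕ} (hn : 1 ≤ n) :
    (Icc 1 n).val.map f = (Icc 1 (n - 1)).val.map f + {f n} := by
  rw [← Ico_add_one_right_eq_Icc, ← Ico_add_one_right_eq_Icc, Nat.sub_add_cancel hn]
  change (Multiset.Ico 1 (n + 1)).map f = (Multiset.Ico 1 n).map f + _
  rw [← Ico_add_Ico_eq_Ico hn (Nat.le_add_right n 1), Multiset.Ico_succ_singleton, Multiset.map_add,
    Multiset.map_singleton]

theorem prefixSums_eq_map_Ico (L : List ℕ) :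
    prefixSums L = (Ico 1 (L.length + 1)).map fun ℓ => (L.take ℓ).sum := by
  rw [← map_add_right_Ico 0 L.length 1, map_map, Multiset.Ico_zero_eq_range]
  rfl

theorem pathSplits_eq_map_Ico (w : List ℕ) :
    pathSplits w = (Ico 1 w.length).map fun ℓ => min (w.take ℓ).sum (w.sum - (w.take ℓ).sum) := by
  rcases Nat.eq_zero_or_pos w.length with h | h
  · simp [pathSplits, h]
  · rw [← Nat.sub_add_cancel h, ← map_add_right_Ico 0 (w.length - 1) 1, map_map,
      Multiset.Ico_zero_eq_range]
    rfl

theorem sum_take_mem_prefixSums {L : List ℕ} {k : ℕ} (hk : 1 ≤ k) (hkL : k ≤ L.length) :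
    (L.take k).sum ∈ prefixSums L := by
  rw [prefixSums_eq_map_Ico]
  exact mem_map_of_mem _ (mem_Ico.2 ⟨hk, Nat.lt_succ_of_le hkL⟩)

theorem sum_mem_prefixSums {L : List ℕ} (hL : L ≠ []) : L.sum ∈ prefixSums L := by
  simpa using sum_take_mem_prefixSums (List.length_pos_iff.2 hL) le_rfl

theorem le_sum_of_mem_prefixSums {L : List ℕ} {x : ℕ} (hx : x ∈ prefixSums L) : x ≤ L.sum := by
  rw [prefixSums_eq_map_Ico, mem_map] at hx
  obtain ⟨ℓ, -, rfl⟩ := hx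
  exact List.sum_take_le_sum L ℓ

theorem pos_of_mem_prefixSums {L : List ℕ} (hL : ∀ x ∈ L, 0 < x) {x : ℕ} (hx : x ∈ prefixSums L) :
    0 < x := by
  rw [prefixSums_eq_map_Ico, mem_map] at hx
  obtain ⟨ℓ, hℓ, rfl⟩ := hx
  rw [mem_Ico] at hℓ
  simpa using List.sum_take_lt_sum_take hL hℓ.1 (by omega)

theorem min_mem_pathSplits {w : List ℕ} {ℓ : ℕ} (hℓ : 1 ≤ ℓ) (hℓw : ℓ < w.length) :
    min (w.take ℓ).sum (w.sum - (w.take ℓ).sum) ∈ pathSplits w := by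
  rw [pathSplits_eq_map_Ico]
  exact mem_map_of_mem _ (mem_Ico.2 ⟨hℓ, hℓw⟩)

theorem prefixSums_reverse (L : List ℕ) :
    prefixSums L.reverse = (range L.length).map fun k => L.sum - (L.take k).sum := by
  rw [prefixSums, ← map_coe, coe_range, List.length_reverse]
  conv_lhs => rw [← map_range_reflect]
  rw [map_map]
  refine map_congr rfl fun k hk => ?_
  rw [mem_range] at hk
  rw [Function.comp_apply, List.sum_take_reverse,
    show L.length - (L.length - 1 - k + 1) = k by omega]

theorem prefixSums_take (w : List ℕ) {c : ℕ} (hc : c ≤ w.length) :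
    prefixSums (w.take c) = (Ico 1 (c + 1)).map fun ℓ => (w.take ℓ).sum := by
  rw [prefixSums_eq_map_Ico, List.length_take_of_le hc]
  refine map_congr rfl fun ℓ hℓ => ?_
  rw [mem_Ico] at hℓ
  rw [List.take_take, min_eq_left (by omega)]

theorem prefixSums_reverse_drop (w : List ℕ) {c : ℕ} (hc : c ≤ w.length) :
    prefixSums (w.drop c).reverse = (Ico c w.length).map fun ℓ => w.sum - (w.take ℓ).sum := by
  rw [prefixSums_reverse, List.length_drop, ← Ico_zero_eq_range]
  rw [show Ico c w.length = (Ico 0 (w.length - c)).map (c + ·) by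
    rw [map_add_left_Ico, add_zero, Nat.add_sub_cancel' hc], map_map]
  refine map_congr rfl fun k _ => ?_
  rw [Function.comp_apply, List.take_add, List.sum_append, ← List.sum_take_add_sum_drop w c]
  omega

theorem prefixSums_take_add_prefixSums_reverse_drop {w : List ℕ} {c : ℕ} (hc : 1 ≤ c)
    (hcw : c < w.length) (hleft : 2 * (w.take (c - 1)).sum ≤ w.sum)
    (hright : w.sum ≤ 2 * (w.take (c + 1)).sum) :
    prefixSums (w.take c) + prefixSums (w.drop c).reverse =
      pathSplits w + {max (w.take c).sum (w.sum - (w.take c).sum)} := by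
  have hsplit_left : ∀ ℓ ∈ Ico 1 c,
      min (w.take ℓ).sum (w.sum - (w.take ℓ).sum) = (w.take ℓ).sum := fun ℓ hℓ => by
    have : (w.take ℓ).sum ≤ (w.take (c - 1)).sum :=
      List.monotone_sum_take w (by rw [mem_Ico] at hℓ; omega)
    exact min_eq_left (by omega)
  have hsplit_right : ∀ ℓ ∈ Ico (c + 1) w.length,
      min (w.take ℓ).sum (w.sum - (w.take ℓ).sum) = w.sum - (w.take ℓ).sum := fun ℓ hℓ => by
    have : (w.take (c + 1)).sum ≤ (w.take ℓ).sum :=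
      List.monotone_sum_take w (by rw [mem_Ico] at hℓ; omega)
    exact min_eq_right (by omega)
  have hc_succ : c ≤ c + 1 := Nat.le_add_right c 1
  rw [prefixSums_take w hcw.le, prefixSums_reverse_drop w hcw.le, pathSplits_eq_map_Ico,
    ← Ico_add_Ico_eq_Ico hc hc_succ, ← Ico_add_Ico_eq_Ico hc_succ hcw,
    ← Ico_add_Ico_eq_Ico hc hcw.le, ← Ico_add_Ico_eq_Ico hc_succ hcw]
  simp only [Multiset.map_add, map_congr rfl hsplit_left, map_congr rfl hsplit_right,
    Ico_succ_singleton, map_singleton]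
  rcases le_total (w.take c).sum (w.sum - (w.take c).sum) with h | h
  · rw [min_eq_left h, max_eq_right h]
    abel
  · rw [min_eq_right h, max_eq_left h]
    abel

theorem validSchedule_of_pathSplits_eq {w : List ℕ} {D : Multiset ℕ} {a b : ℕ}
    (hpos : ∀ x ∈ w, 0 < x) (hsum : w.sum = a + b) (hsplits : pathSplits w = D)
    (ha : a ∈ D) (hD : ∀ x ∈ D, x ≤ a) : ValidSchedule w (D + {b}) := by
  subst hsplits
  rw [pathSplits_eq_map_Ico, mem_map] at ha
  obtain ⟨c, hc, rfl⟩ := ha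
  rw [mem_Ico] at hc
  have hPc := List.sum_take_le_sum w c
  -- otherwise the split at `c - 1`, resp. `c + 1`, would exceed the largest split `a`
  have hleft : 2 * (w.take (c - 1)).sum ≤ w.sum := by
    by_contra h
    have hc1 : 1 ≤ c - 1 := by
      by_contra h'
      rw [show c - 1 = 0 by omega, List.take_zero, List.sum_nil] at h
      omega
    have hlt := List.sum_take_lt_sum_take hpos (show c - 1 < c by omega) hc.2.le
    have := hD _ (min_mem_pathSplits hc1 (by omega))
    omega
  have hright : w.sum ≤ 2 * (w.take (c + 1)).sum := by
    by_contra h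
    have hcw : c + 1 < w.length := by
      by_contra h'
      rw [List.take_of_length_le (by omega)] at h
      omega
    have hlt := List.sum_take_lt_sum_take hpos (show c < c + 1 by omega) hcw.le
    have := hD _ (min_mem_pathSplits (by omega) hcw)
    omega
  refine ⟨w.take c, (w.drop c).reverse, ?_, ?_⟩
  · rw [coe_reverse, coe_add, List.take_append_drop]
  · rw [prefixSums_take_add_prefixSums_reverse_drop hc.1 hc.2 hleft hright]
    congr 2
    omega

theorem sum_eq_of_prefixSums_add_eq {L₁ L₂ : List ℕ} {D : Multiset ℕ} {b : ℕ}
    (hsched : prefixSums L₁ + prefixSums L₂ = D + {b}) (hD : ∀ x ∈ D, x ≤ b) (hb : 0 < b)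
    (hle : L₁.sum ≤ L₂.sum) : L₂.sum = b := by
  have hb_le : b ≤ L₂.sum := by
    have hb_mem : b ∈ prefixSums L₁ + prefixSums L₂ :=
      hsched ▸ mem_add.2 (Or.inr (mem_singleton_self b))
    rcases mem_add.1 hb_mem with h | h
    · exact (le_sum_of_mem_prefixSums h).trans hle
    · exact le_sum_of_mem_prefixSums h
  have hL₂ : L₂ ≠ [] := by
    rintro rfl
    exact hb.ne' (Nat.le_zero.1 hb_le)
  have hsum_mem : L₂.sum ∈ D + {b} := hsched ▸ mem_add.2 (Or.inr (sum_mem_prefixSums hL₂))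
  rcases mem_add.1 hsum_mem with h | h
  · exact le_antisymm (hD _ h) hb_le
  · exact mem_singleton.1 h

theorem pathSplits_append_reverse_eq {L₁ L₂ : List ℕ} {D : Multiset ℕ} {a b : ℕ}
    (hpos₂ : ∀ x ∈ L₂, 0 < x) (hsched : prefixSums L₁ + prefixSums L₂ = D + {b})
    (hsum₁ : L₁.sum = a) (hsum₂ : L₂.sum = b) (ha : 0 < a) (hD : ∀ x ∈ D, x ≤ a) (hab : a ≤ b) :
    pathSplits (L₁ ++ L₂.reverse) = D := by
  have hL₁ : 1 ≤ L₁.length := List.length_pos_iff.2 (by rintro rfl; simp at hsum₁; omega)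
  have hL₂ : 1 ≤ L₂.length := List.length_pos_iff.2 (by rintro rfl; simp at hsum₂; omega)
  have hinit : (L₂.take (L₂.length - 1)).sum ≤ a := by
    rcases Nat.eq_zero_or_pos (L₂.length - 1) with h | h
    · simp [h]
    have hlt : (L₂.take (L₂.length - 1)).sum < b := by
      simpa [← hsum₂] using
        List.sum_take_lt_sum_take hpos₂ (show L₂.length - 1 < L₂.length by omega) le_rfl
    have hmem : (L₂.take (L₂.length - 1)).sum ∈ D + {b} :=
      hsched ▸ mem_add.2 (Or.inr (sum_take_mem_prefixSums h (Nat.sub_le _ _)))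
    rcases mem_add.1 hmem with h | h
    · exact hD _ h
    · exact absurd (mem_singleton.1 h) hlt.ne
  have hwsum : (L₁ ++ L₂.reverse).sum = a + b := by simp [hsum₁, hsum₂]
  have htake : (L₁ ++ L₂.reverse).take L₁.length = L₁ := List.take_left' rfl
  have hleft : 2 * ((L₁ ++ L₂.reverse).take (L₁.length - 1)).sum ≤ (L₁ ++ L₂.reverse).sum := by
    have := List.monotone_sum_take (L₁ ++ L₂.reverse) (Nat.sub_le L₁.length 1)
    simp only [htake] at this
    omega
  have hright : (L₁ ++ L₂.reverse).sum ≤ 2 * ((L₁ ++ L₂.reverse).take (L₁.length + 1)).sum := by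
    rw [hwsum, List.take_length_add_append, List.sum_append, List.sum_take_reverse]
    omega
  have key := prefixSums_take_add_prefixSums_reverse_drop hL₁ (by simp; omega) hleft hright
  rw [htake, List.drop_left' rfl, List.reverse_reverse, hsched, hwsum, hsum₁,
    show max a (a + b - a) = b by omega] at key
  exact (add_right_cancel key).symm

theorem validSchedule_add_singleton_iff {J D : Multiset ℕ} {a b : ℕ} (hJ : ∀ x ∈ J, 0 < x)
    (hsum : J.sum = a + b) (ha : a ∈ D) (hD : ∀ x ∈ D, x ≤ a) (hab : a ≤ b) :
    ValidSchedule J (D + {b}) ↔ ∃ w : List ℕ, (w : Multiset ℕ) = J ∧ pathSplits w = D := by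
  constructor
  · rintro ⟨L₁, L₂, hJL, hsched⟩
    wlog hle : L₁.sum ≤ L₂.sum generalizing L₁ L₂
    · exact this L₂ L₁ (by rwa [add_comm]) (by rwa [add_comm]) (le_of_not_ge hle)
    have hpos₁ : ∀ x ∈ L₁, 0 < x := fun x hx => hJ x (hJL ▸ mem_add.2 (Or.inl hx))
    have hpos₂ : ∀ x ∈ L₂, 0 < x := fun x hx => hJ x (hJL ▸ mem_add.2 (Or.inr hx))
    have ha_pos : 0 < a := by
      rcases mem_add.1 (hsched ▸ mem_add.2 (Or.inl ha) : a ∈ prefixSums L₁ + prefixSums L₂)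
        with h | h
      · exact pos_of_mem_prefixSums hpos₁ h
      · exact pos_of_mem_prefixSums hpos₂ h
    have hsum₂ := sum_eq_of_prefixSums_add_eq hsched (fun x hx => (hD x hx).trans hab)
      (ha_pos.trans_le hab) hle
    have hsum₁ : L₁.sum = a := by
      have := congrArg Multiset.sum hJL
      rw [sum_add, sum_coe, sum_coe, hsum] at this
      omega
    refine ⟨L₁ ++ L₂.reverse, by rw [← coe_add, coe_reverse, hJL],
      pathSplits_append_reverse_eq hpos₂ hsched hsum₁ hsum₂ ha_pos hD hab⟩
  · rintro ⟨w, rfl, hw⟩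
    exact validSchedule_of_pathSplits_eq hJ hsum hw ha hD

theorem stmt_9_general (n : ℕ) (hn : 2 ≤ n) (j d : ℕ → ℕ)
    (hjpos : ∀ i, 1 ≤ i → i ≤ n → 0 < j i)
    (hdmono : ∀ i, 1 ≤ i → i < n → d i ≤ d (i + 1))
    (hsum : ∑ i ∈ Finset.Icc 1 n, j i = d (n - 1) + d n) :
    ValidSchedule ((Finset.Icc 1 n).val.map j) ((Finset.Icc 1 n).val.map d) ↔
    ∃ π : Equiv.Perm (Fin n),
      pathSplits (List.ofFn (fun i : Fin n => j ((π i : ℕ) + 1))) =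
        (Finset.Icc 1 (n - 1)).val.map d := by
  have hmono : MonotoneOn d (Set.Icc 1 n) := monotoneOn_of_le_succ Set.ordConnected_Icc
    fun i _ hi hsucc => hdmono i hi.1 <| by
      simp only [Order.succ_eq_add_one, Set.mem_Icc] at hsucc
      omega
  have hJ : ∀ x ∈ (Finset.Icc 1 n).val.map j, 0 < x := by
    simp only [mem_map, Finset.mem_val, Finset.mem_Icc]
    rintro _ ⟨i, hi, rfl⟩
    exact hjpos i hi.1 hi.2
  have hD : ∀ x ∈ (Finset.Icc 1 (n - 1)).val.map d, x ≤ d (n - 1) := by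
    simp only [mem_map, Finset.mem_val, Finset.mem_Icc]
    rintro _ ⟨i, hi, rfl⟩
    exact hmono ⟨hi.1, by omega⟩ ⟨by omega, by omega⟩ hi.2
  have ha : d (n - 1) ∈ (Finset.Icc 1 (n - 1)).val.map d :=
    mem_map_of_mem d (Finset.mem_Icc.2 ⟨by omega, le_rfl⟩ : n - 1 ∈ Finset.Icc 1 (n - 1))
  have hab : d (n - 1) ≤ d n := hmono ⟨by omega, by omega⟩ ⟨by omega, le_rfl⟩ (Nat.sub_le n 1)
  rw [Finset.map_Icc_one_val_eq_add_singleton d (by omega),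
    validSchedule_add_singleton_iff hJ hsum ha hD hab, Finset.map_Icc_one_val_eq_ofFn]
  constructor
  · rintro ⟨w, hw, hsplits⟩
    obtain ⟨π, rfl⟩ := List.exists_perm_ofFn_comp_eq (coe_eq_coe.1 hw)
    exact ⟨π, hsplits⟩
  · rintro ⟨π, hsplits⟩
    exact ⟨_, coe_eq_coe.2 (π.ofFn_comp_perm _), hsplits⟩

/-- SCD ≤p WSR₂: for positive jobs `j 1, …, j n` and sorted positive
deadlines `d 1 ≤ … ≤ d n` with `∑ j = d (n-1) + d n` and `n ≥ 2`, there is a valid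
two-processor schedule iff some permutation of the jobs, taken as vertex weights of a
path, has split multiset `{d 1, …, d (n-1)}`. -/
theorem stmt_9 (n : ℕ) (hn : 2 ≤ n) (j d : ℕ → ℕ)
    (hjpos : ∀ i, 1 ≤ i → i ≤ n → 0 < j i)
    (hdpos : ∀ i, 1 ≤ i → i ≤ n → 0 < d i)
    (hdmono : ∀ i, 1 ≤ i → i < n → d i ≤ d (i + 1))
    (hsum : ∑ i ∈ Finset.Icc 1 n, j i = d (n - 1) + d n) :
    ValidSchedule ((Finset.Icc 1 n).val.map j) ((Finset.Icc 1 n).val.map d) ↔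
    ∃ π : Equiv.Perm (Fin n),
      pathSplits (List.ofFn (fun i : Fin n => j ((π i : ℕ) + 1))) =
        (Finset.Icc 1 (n - 1)).val.map d :=
  stmt_9_general n hn j d hjpos hdmono hsum
end

section
/- Let T be a tree with positive integer vertex weights, and let e_1, e_2, e_3 be three distinct edges lying on a common path of T such that e_2 lies strictly between e_1 and e_3 on this path. Then split(e_2) > min(split(e_1), split(e_3)). (In particular, on a path between two leaves of a weighted tree there is no split of value at most b strictly between two splits of value greater than b.) -/
/-! Deleting an edge `e₁ = {x, y}` of a path in a forest, the side of `x` is contained in the side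
of `a` for any later path edge `e₂ = {a, b}`, and it misses `y`, which lies on that side of `e₂`.
With positive weights the side weights therefore strictly increase towards `e₂` from both ends of
the path, so both `split e₁` and `split e₃` are smaller than one of the two sides of `e₂`. -/

open scoped Classical in
/-- The total weight of the component of `u` after deleting the edge `{u, v}`:
the sum of `ω w` over all vertices `w` that remain reachable from `u`. -/
noncomputable def sideWeight {V : Type*} [Fintype V] (G : SimpleGraph V)
    (ω : V → ℕ) (u v : V) : ℕ :=
  ∑ w : V, if (G.deleteEdges {s(u, v)}).Reachable w u then ω w else 0

/-- The split of an edge of a vertex-weighted graph: the minimum of the total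
weights of the two sides obtained by deleting the edge. -/
noncomputable def edgeSplit {V : Type*} [Fintype V] (G : SimpleGraph V)
    (ω : V → ℕ) : Sym2 V → ℕ :=
  Sym2.lift ⟨fun u v => min (sideWeight G ω u v) (sideWeight G ω v u),
    fun _ _ => min_comm _ _⟩

open scoped Classical in
/-- The split multiset `𝒮(T)` of a vertex-weighted graph: the multiset of the
splits of all its edges. -/
noncomputable def splitMultiset {V : Type*} [Fintype V] (G : SimpleGraph V)
    (ω : V → ℕ) : Multiset ℕ :=
  (Finset.univ.filter (fun e : Sym2 V => e ∈ G.edgeSet)).val.map (edgeSplit G ω)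

namespace SimpleGraph

variable {V : Type*} {G : SimpleGraph V}

namespace Walk

lemma reachable_getVert_deleteEdges {u v : V} (p : G.Walk u v) {e : Sym2 V} {i j : ℕ}
    (hij : i ≤ j) (hj : j ≤ p.length)
    (he : ∀ k, i ≤ k → k < j → s(p.getVert k, p.getVert (k + 1)) ≠ e) :
    (G.deleteEdges {e}).Reachable (p.getVert i) (p.getVert j) := by
  induction j, hij using Nat.le_induction with
  | base => rfl
  | succ j hij ih =>
    have hadj : (G.deleteEdges {e}).Adj (p.getVert j) (p.getVert (j + 1)) := by
      rw [deleteEdges_adj]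
      exact ⟨p.adj_getVert_succ (by omega), he j hij (by omega)⟩
    exact (ih (by omega) fun k hik hkj => he k hik (by omega)).trans hadj.reachable

lemma IsPath.mk_getVert_succ_ne {u v : V} {p : G.Walk u v} (hp : p.IsPath) {k m : ℕ}
    (hk : k < p.length) (hm : m < p.length) (hkm : k ≠ m) :
    s(p.getVert k, p.getVert (k + 1)) ≠ s(p.getVert m, p.getVert (m + 1)) := by
  have hk' : k < p.edges.length := by simpa using hk
  have hm' : m < p.edges.length := by simpa using hm
  rw [← getElem_edges hk', ← getElem_edges hm']
  exact fun h => hkm (hp.isTrail.edges_nodup.getElem_inj_iff.mp h)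

lemma IsPath.reachable_getVert_deleteEdges {u v : V} {p : G.Walk u v} (hp : p.IsPath)
    {m i j : ℕ} (hm : m < p.length) (hij : i ≤ j) (hj : j ≤ p.length) (hmij : m < i ∨ j ≤ m) :
    (G.deleteEdges {s(p.getVert m, p.getVert (m + 1))}).Reachable (p.getVert i) (p.getVert j) :=
  p.reachable_getVert_deleteEdges hij hj fun k hik hkj =>
    hp.mk_getVert_succ_ne (by omega) hm (by omega)

end Walk

lemma IsAcyclic.reachable_deleteEdges_of_reachable (hG : G.IsAcyclic) {x y a b w : V}
    (hxy : G.Adj x y) (hyb : (G.deleteEdges {s(x, y)}).Reachable y b)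
    (hxa : (G.deleteEdges {s(a, b)}).Reachable x a)
    (hw : (G.deleteEdges {s(x, y)}).Reachable w x) :
    (G.deleteEdges {s(a, b)}).Reachable w a := by
  classical
  obtain ⟨W, hW⟩ := reachable_deleteEdges_iff_exists_walk.mp hw
  obtain ⟨X, hX⟩ := reachable_deleteEdges_iff_exists_walk.mp hxa
  by_cases hab : s(a, b) ∈ W.edges
  · -- then `b` lies on `W`, which joins `y` to `x` off the bridge `{x, y}`
    exfalso
    obtain ⟨Y, hY⟩ := reachable_deleteEdges_iff_exists_walk.mp hyb
    have hb : b ∈ W.support := W.snd_mem_support_of_mem_edges hab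
    have hWb : s(x, y) ∉ (W.dropUntil b hb).edges :=
      fun h => hW (W.edges_dropUntil_subset_edges hb h)
    have hbridge := isBridge_iff_forall_walk_mem_edges.mp
      (isAcyclic_iff_forall_adj_isBridge.mp hG hxy.symm) (Y.append (W.dropUntil b hb))
    rw [Sym2.eq_swap, Walk.edges_append, List.mem_append] at hbridge
    exact hbridge.elim hY hWb
  · refine reachable_deleteEdges_iff_exists_walk.mpr ⟨W.append X, ?_⟩
    rw [Walk.edges_append, List.mem_append]
    exact fun h => h.elim hab hX

end SimpleGraph

lemma sideWeight_lt_sideWeight {V : Type*} [Fintype V] {G : SimpleGraph V} {ω : V → ℕ}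
    (hω : ∀ v, 0 < ω v) {x y a b : V}
    (hsub : ∀ w, (G.deleteEdges {s(x, y)}).Reachable w x →
      (G.deleteEdges {s(a, b)}).Reachable w a)
    (hy : ¬(G.deleteEdges {s(x, y)}).Reachable y x)
    (hya : (G.deleteEdges {s(a, b)}).Reachable y a) :
    sideWeight G ω x y < sideWeight G ω a b := by
  classical
  refine Finset.sum_lt_sum (fun w _ => ?_) ⟨y, Finset.mem_univ y, by simp [hy, hya, hω y]⟩
  by_cases hw : (G.deleteEdges {s(x, y)}).Reachable w x
  · simp [hw, hsub w hw]
  · simp [hw]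

namespace SimpleGraph.Walk.IsPath

variable {V : Type*} [Fintype V] {G : SimpleGraph V} {ω : V → ℕ} {u v : V} {p : G.Walk u v}

lemma sideWeight_lt_of_lt (hp : p.IsPath) (hG : G.IsAcyclic) (hω : ∀ v, 0 < ω v) {i j : ℕ}
    (hij : i < j) (hj : j < p.length) :
    sideWeight G ω (p.getVert i) (p.getVert (i + 1)) <
      sideWeight G ω (p.getVert j) (p.getVert (j + 1)) := by
  have hxy := p.adj_getVert_succ (i := i) (by omega)
  have hyb := hp.reachable_getVert_deleteEdges (m := i) (i := i + 1) (j := j + 1)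
    (by omega) (by omega) (by omega) (by omega)
  have hxa := hp.reachable_getVert_deleteEdges (m := j) (i := i) (j := j)
    hj (by omega) (by omega) (by omega)
  have hya := hp.reachable_getVert_deleteEdges (m := j) (i := i + 1) (j := j)
    hj (by omega) (by omega) (by omega)
  exact sideWeight_lt_sideWeight hω (fun w => hG.reachable_deleteEdges_of_reachable hxy hyb hxa)
    (fun h => isAcyclic_iff_forall_adj_isBridge.mp hG hxy h.symm) hya

lemma sideWeight_succ_lt_of_lt (hp : p.IsPath) (hG : G.IsAcyclic) (hω : ∀ v, 0 < ω v)
    {i j : ℕ} (hij : i < j) (hj : j < p.length) :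
    sideWeight G ω (p.getVert (j + 1)) (p.getVert j) <
      sideWeight G ω (p.getVert (i + 1)) (p.getVert i) := by
  have h := hp.reverse.sideWeight_lt_of_lt hG hω (i := p.length - 1 - j)
    (j := p.length - 1 - i) (by omega) (by rw [length_reverse]; omega)
  simp only [getVert_reverse] at h
  rwa [show p.length - (p.length - 1 - j) = j + 1 by omega,
    show p.length - (p.length - 1 - j + 1) = j by omega,
    show p.length - (p.length - 1 - i) = i + 1 by omega,
    show p.length - (p.length - 1 - i + 1) = i by omega] at h

end SimpleGraph.Walk.IsPath

/-- in a tree with positive vertex weights, if `e1, e2, e3` are three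
edges lying on a common path with `e2` strictly between `e1` and `e3`, then
`split(e2) > min (split(e1), split(e3))`. -/
theorem stmt_12 {V : Type*} [Fintype V] (G : SimpleGraph V)
    (hacyc : G.IsAcyclic)
    (ω : V → ℕ) (hω : ∀ v, 0 < ω v)
    (u v : V) (p : G.Walk u v) (hp : p.IsPath)
    (i1 i2 i3 : ℕ) (h12 : i1 < i2) (h23 : i2 < i3) (h3 : i3 < p.edges.length)
    (e1 e2 e3 : Sym2 V)
    (he1 : p.edges[i1]'(by omega) = e1)
    (he2 : p.edges[i2]'(by omega) = e2)
    (he3 : p.edges[i3]'(by omega) = e3) :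
    min (edgeSplit G ω e1) (edgeSplit G ω e3) < edgeSplit G ω e2 := by
  rw [SimpleGraph.Walk.length_edges] at h3
  have hside1 := hp.sideWeight_lt_of_lt hacyc hω h12 (by omega)
  have hside3 := hp.sideWeight_succ_lt_of_lt hacyc hω h23 h3
  subst he1 he2 he3
  simp only [SimpleGraph.Walk.getElem_edges, edgeSplit, Sym2.lift_mk]
  omega
end

section
/- For every n ≥ 2 and every multiset S of n−1 positive integers, there exist a tree T on n vertices and a weight function ω assigning a positive integer weight to each vertex of T such that the split multiset 𝒮(T) equals S. (That is, every instance of the choosable-weights split reconstruction problem ChWSR is a Yes-instance.) -/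
open Finset

namespace SimpleGraph

variable {V : Type*} {r v : V}

lemma reachable_deleteEdges_starGraph_leaf_iff (hv : r ≠ v) (w : V) :
    ((starGraph r).deleteEdges {s(r, v)}).Reachable w v ↔ w = v := by
  refine ⟨fun h => by_contra fun hw => not_reachable_of_neighborSet_right_eq_empty hw ?_ h,
    fun h => h ▸ .rfl⟩
  ext x
  simp only [mem_neighborSet, deleteEdges_adj, starGraph_adj, Set.mem_singleton_iff,
    Set.mem_empty_iff_false, iff_false]
  rintro ⟨⟨hvx, rfl | rfl⟩, hne⟩
  · exact hv rfl
  · exact hne Sym2.eq_swap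

lemma reachable_deleteEdges_starGraph_center_iff (hv : r ≠ v) (w : V) :
    ((starGraph r).deleteEdges {s(r, v)}).Reachable w r ↔ w ≠ v := by
  refine ⟨fun h hw => hv ((reachable_deleteEdges_starGraph_leaf_iff hv r).1 (hw ▸ h.symm)),
    fun hw => ?_⟩
  by_cases hwr : w = r
  · exact hwr ▸ .rfl
  · refine Adj.reachable (deleteEdges_adj.2 ⟨starGraph_adj.2 ⟨hwr, .inr rfl⟩, ?_⟩)
    simp [hwr, hw]

variable [Fintype V] (ω : V → ℕ)

lemma sideWeight_starGraph_leaf (hv : r ≠ v) : sideWeight (starGraph r) ω v r = ω v := by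
  classical
  rw [sideWeight, Sym2.eq_swap]
  simp [reachable_deleteEdges_starGraph_leaf_iff hv]

lemma sideWeight_starGraph_center [DecidableEq V] (hv : r ≠ v) :
    sideWeight (starGraph r) ω r v = ∑ w ∈ univ.erase v, ω w := by
  simp only [sideWeight, reachable_deleteEdges_starGraph_center_iff hv]
  rw [← sum_filter, filter_ne']

lemma edgeSplit_starGraph_of_le (hv : r ≠ v) (hle : ω v ≤ ω r) :
    edgeSplit (starGraph r) ω s(r, v) = ω v := by
  classical
  have hcenter : ω v ≤ sideWeight (starGraph r) ω r v := by
    rw [sideWeight_starGraph_center ω hv]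
    exact hle.trans (single_le_sum (fun _ _ => Nat.zero_le _) (mem_erase.2 ⟨hv, mem_univ r⟩))
  rw [edgeSplit, Sym2.lift_mk]
  exact (min_eq_right (sideWeight_starGraph_leaf ω hv ▸ hcenter)).trans
    (sideWeight_starGraph_leaf ω hv)

lemma filter_mem_edgeSet_starGraph [DecidableEq V]
    [DecidablePred (· ∈ (starGraph r).edgeSet)] :
    univ.filter (· ∈ (starGraph r).edgeSet) =
      (univ.erase r).map ⟨(s(r, ·)), fun _ _ => Sym2.congr_right.1⟩ := by
  ext e
  induction e using Sym2.ind with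
  | h x y =>
    simp only [mem_filter, mem_univ, true_and, mem_edgeSet, starGraph_adj, mem_map, mem_erase,
      and_true]
    constructor
    · rintro ⟨hxy, rfl | rfl⟩
      exacts [⟨y, Ne.symm hxy, rfl⟩, ⟨x, hxy, Sym2.eq_swap⟩]
    · rintro ⟨a, ha, hs⟩
      rcases Sym2.eq_iff.1 hs with ⟨rfl, rfl⟩ | ⟨rfl, rfl⟩
      exacts [⟨Ne.symm ha, .inl rfl⟩, ⟨ha, .inr rfl⟩]

lemma splitMultiset_starGraph_of_le [DecidableEq V] (hle : ∀ v, ω v ≤ ω r) :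
    splitMultiset (starGraph r) ω = (univ.erase r).val.map ω := by
  rw [splitMultiset]
  simp only [filter_mem_edgeSet_starGraph]
  rw [map_val, Multiset.map_map]
  exact Multiset.map_congr rfl fun v hv =>
    edgeSplit_starGraph_of_le ω (Ne.symm (mem_erase.1 hv).1) (hle v)

end SimpleGraph

lemma Multiset.exists_fin_map_univ_eq {α : Type*} (S : Multiset α) {m : ℕ} (hm : card S = m) :
    ∃ f : Fin m → α, univ.val.map f = S := by
  subst hm
  refine ⟨fun i => S.toList.get (i.cast S.length_toList.symm), ?_⟩
  rw [Fin.univ_val_map, ← List.ofFn_congr S.length_toList S.toList.get, List.ofFn_get,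
    coe_toList]

lemma Fin.map_cons_univ_erase_zero {α : Type*} {m : ℕ} (a : α) (f : Fin m → α) :
    ((univ : Finset (Fin (m + 1))).erase 0).val.map (Fin.cons a f : Fin (m + 1) → α) =
      univ.val.map f := by
  rw [Fin.univ_succ, erase_cons, map_val, Multiset.map_map]
  rfl

open SimpleGraph

/-- ChWSR is always a Yes-instance: for every `n ≥ 2` and every
multiset `S` of `n−1` positive integers, there are a tree `T` on `n` vertices and
positive integer vertex weights whose split multiset equals `S`. -/
theorem stmt_14 (n : ℕ) (hn : 2 ≤ n) (S : Multiset ℕ)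
    (hcard : Multiset.card S = n - 1)
    (hpos : ∀ x ∈ S, 0 < x) :
    ∃ (G : SimpleGraph (Fin n)) (ω : Fin n → ℕ),
      G.Connected ∧ G.IsAcyclic ∧ (∀ v, 0 < ω v) ∧ splitMultiset G ω = S := by
  obtain ⟨m, rfl⟩ : ∃ m, n = m + 1 := ⟨n - 1, by omega⟩
  obtain ⟨f, hf⟩ := S.exists_fin_map_univ_eq (m := m) hcard
  have hf_mem (j : Fin m) : f j ∈ S := hf ▸ Multiset.mem_map_of_mem f (mem_univ_val j)
  refine ⟨starGraph 0, Fin.cons (S.sum + 1) f, connected_starGraph 0, isAcyclic_starGraph 0,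
    Fin.cases (Nat.succ_pos _) fun j => hpos _ (hf_mem j), ?_⟩
  rw [splitMultiset_starGraph_of_le, Fin.map_cons_univ_erase_zero, hf]
  exact Fin.cases le_rfl fun j => (Multiset.le_sum_of_mem (hf_mem j)).trans (Nat.le_succ _)
end

section
/- Let n ≥ 2 and let S be a multiset of n−1 positive integers in which every value occurs at most twice. Then there exist positive integers w_1,…,w_n such that the split multiset of the path with weights w_1,…,w_n equals S. (That is, if each split repeats at most twice, the split multiset can be realized by a path with freely chosen vertex weights.) -/
/-!
A path of total weight `W` is determined by its cut points `0 < c₁ < ⋯ < c_{n-1} < W`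
(the proper prefix sums; the weights are their successive differences), and the cut point `c`
contributes the split `min c (W - c)`. Choose `W` larger than twice every element of `S`, and
place the first copy of each value `x` at `x` and the second copy at `W - x`. These cut points
are distinct because no value occurs more than twice, and each yields the split `x`.
-/

def diffsFrom : ℕ → List ℕ → List ℕ
  | _, [] => []
  | p, a :: l => (a - p) :: diffsFrom a l

@[simp]
lemma length_diffsFrom (p : ℕ) (l : List ℕ) : (diffsFrom p l).length = l.length := by
  induction l generalizing p with
  | nil => rfl
  | cons a l ih => simp [diffsFrom, ih]

lemma pos_of_mem_diffsFrom {p : ℕ} {l : List ℕ} (h : (p :: l).IsChain (· < ·)) :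
    ∀ x ∈ diffsFrom p l, 0 < x := by
  induction l generalizing p with
  | nil => simp [diffsFrom]
  | cons a l ih =>
    rw [List.isChain_cons_cons] at h
    simp only [diffsFrom, List.mem_cons, forall_eq_or_imp]
    exact ⟨Nat.sub_pos_of_lt h.1, ih h.2⟩

lemma add_sum_take_diffsFrom {p : ℕ} {l : List ℕ} (h : (p :: l).IsChain (· ≤ ·))
    {k : ℕ} (hk : k < l.length) : p + ((diffsFrom p l).take (k + 1)).sum = l[k] := by
  induction l generalizing p k with
  | nil => simp at hk
  | cons a l ih =>
    rw [List.isChain_cons_cons] at h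
    cases k with
    | zero =>
      simp only [diffsFrom, List.take_succ_cons, List.take_zero, List.sum_cons, List.sum_nil,
        List.getElem_cons_zero]
      omega
    | succ k =>
      have := ih h.2 (k := k) (by simpa using hk)
      simp only [diffsFrom, List.take_succ_cons, List.sum_cons, List.getElem_cons_succ]
      omega

lemma pathSplits_diffsFrom {c : List ℕ} {W : ℕ} (h : (0 :: c ++ [W]).IsChain (· < ·)) :
    pathSplits (diffsFrom 0 (c ++ [W])) = (c.map fun x => min x (W - x) : Multiset ℕ) := by
  have hle : (0 :: c ++ [W]).IsChain (· ≤ ·) := h.imp fun _ _ => le_of_lt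
  have hprefix : ∀ k (hk : k < c.length + 1),
      ((diffsFrom 0 (c ++ [W])).take (k + 1)).sum = (c ++ [W])[k]'(by simpa using hk) :=
    fun k hk => by simpa using add_sum_take_diffsFrom hle (k := k) (by simpa using hk)
  have hsum : (diffsFrom 0 (c ++ [W])).sum = W := by
    simpa [List.take_of_length_le] using hprefix c.length (by omega)
  unfold pathSplits
  congr 1
  apply List.ext_getElem (by simp)
  intro k _ hk
  rw [List.length_map] at hk
  simp [hsum, hprefix k (by omega), List.getElem_append_left hk]

lemma exists_pathSplits_eq_map (C : Finset ℕ) {W : ℕ} (hW : 0 < W) (hpos : ∀ x ∈ C, 0 < x)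
    (hlt : ∀ x ∈ C, x < W) :
    ∃ w : List ℕ, w.length = C.card + 1 ∧ (∀ x ∈ w, 0 < x) ∧
      pathSplits w = C.val.map fun x => min x (W - x) := by
  set c := C.sort
  have hchain : (0 :: c ++ [W]).IsChain (· < ·) := by
    refine List.Pairwise.isChain ?_
    simp only [List.cons_append, List.pairwise_cons, List.pairwise_append, List.mem_append,
      List.mem_singleton, Finset.mem_sort, c]
    exact ⟨fun x hx => hx.elim (hpos x) fun hx => hx ▸ hW,
      C.sortedLT_sort.pairwise, by simp, fun x hx _ hy => hy ▸ hlt x hx⟩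
  refine ⟨diffsFrom 0 (c ++ [W]), by simp [c], pos_of_mem_diffsFrom hchain, ?_⟩
  rw [pathSplits_diffsFrom hchain, ← Multiset.map_coe, Finset.sort_eq]

lemma Multiset.nodup_sub_dedup {α : Type*} [DecidableEq α] {S : Multiset α}
    (h : ∀ x, S.count x ≤ 2) : (S - S.dedup).Nodup := by
  rw [Multiset.nodup_iff_count_le_one]
  intro a
  rw [Multiset.count_sub, Multiset.count_dedup]
  have := h a
  split_ifs with ha
  · omega
  · simp [Multiset.count_eq_zero.2 ha]

lemma exists_finset_map_min_eq {S : Multiset ℕ} {T W : ℕ} (hW : 2 * T < W)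
    (hpos : ∀ x ∈ S, 0 < x) (hle : ∀ x ∈ S, x ≤ T) (hmult : ∀ x, S.count x ≤ 2) :
    ∃ C : Finset ℕ, C.card = Multiset.card S ∧ (∀ x ∈ C, 0 < x ∧ x < W) ∧
      C.val.map (fun x => min x (W - x)) = S := by
  classical
  set A := S.dedup
  set B := S - S.dedup
  have hAB : A + B = S := add_tsub_cancel_of_le (Multiset.dedup_le S)
  have hmemA : ∀ x ∈ A, x ∈ S := fun x => Multiset.mem_dedup.1
  have hmemB : ∀ x ∈ B, x ∈ S := fun x => Multiset.mem_of_le tsub_le_self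
  have hnodup : (A + B.map (W - ·)).Nodup := by
    rw [Multiset.nodup_add]
    refine ⟨S.nodup_dedup, (Multiset.nodup_sub_dedup hmult).map_on ?_, ?_⟩
    · intro x hx y hy hxy
      have := hle x (hmemB x hx)
      have := hle y (hmemB y hy)
      omega
    · rw [Multiset.disjoint_left]
      intro _ hA hB
      obtain ⟨y, hy, rfl⟩ := Multiset.mem_map.1 hB
      have := hle y (hmemB y hy)
      have := hle _ (hmemA _ hA)
      omega
  refine ⟨⟨_, hnodup⟩, ?_, ?_, ?_⟩
  · simp [← hAB]
  · simp only [Finset.mem_mk, Multiset.mem_add, Multiset.mem_map]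
    rintro _ (hA | ⟨y, hy, rfl⟩)
    · have := hpos _ (hmemA _ hA)
      have := hle _ (hmemA _ hA)
      omega
    · have := hpos y (hmemB y hy)
      have := hle y (hmemB y hy)
      omega
  · rw [Multiset.map_add, Multiset.map_map, ← hAB]
    congr 1
    · refine (Multiset.map_congr rfl fun x hx => ?_).trans (Multiset.map_id' A)
      have := hle x (hmemA x hx)
      omega
    · refine (Multiset.map_congr rfl fun x hx => ?_).trans (Multiset.map_id' B)
      have := hle x (hmemB x hx)
      simp only [Function.comp_apply]
      omega

/-- if `S` is a multiset of `n−1` positive integers (`n ≥ 2`) in which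
every value occurs at most twice, then `S` is the split multiset of a path on `n`
vertices with freely chosen positive integer weights. -/
theorem stmt_15 (n : ℕ) (hn : 2 ≤ n) (S : Multiset ℕ)
    (hcard : Multiset.card S = n - 1)
    (hpos : ∀ x ∈ S, 0 < x)
    (hmult : ∀ x : ℕ, S.count x ≤ 2) :
    ∃ w : List ℕ, w.length = n ∧ (∀ x ∈ w, 0 < x) ∧ pathSplits w = S := by
  obtain ⟨C, hCcard, hCbounds, hCsplits⟩ :=
    exists_finset_map_min_eq (T := S.sum) (W := 2 * S.sum + 1) (by omega) hpos
      (fun _ hx => Multiset.le_sum_of_mem hx) hmult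
  obtain ⟨w, hwlen, hwpos, hw⟩ := exists_pathSplits_eq_map C (by omega)
    (fun x hx => (hCbounds x hx).1) (fun x hx => (hCbounds x hx).2)
  exact ⟨w, by omega, hwpos, hw.trans hCsplits⟩
end
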